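/- arXiv:1702.05951 — 2 statements merged into one kernel-verified Lean document; each statement's English description precedes it below -/
import Mathlib

section
/- Let G be a finite connected weighted graph with terminals T, S ⊂ T nonempty and proper with minimum cutset E_S, and let C be an elementary component of G∖E_S with, without loss of generality, T∩C ⊆ S. Then E_S ∖ δ(C) is the minimum cutset separating S' = S∖(T∩C) from T∖S' (provided S' is nonempty), i.e., E_{S'} = E_S ∖ δ(C). -/
open scoped Classical

def Separates {V : Type} (G : SimpleGraph V) (F : Set (Sym2 V)) (A B : Set V) : Prop :=
  ∀ a ∈ A, ∀ b ∈ B, ¬ (G.deleteEdges F).Reachable a b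

noncomputable def cutWeight {V : Type} (c : Sym2 V → ℝ) (F : Finset (Sym2 V)) : ℝ :=
  ∑ e ∈ F, c e

def IsMinCutset {V : Type} (G : SimpleGraph V) (c : Sym2 V → ℝ) (T S : Set V)
    (F : Finset (Sym2 V)) : Prop :=
  (F : Set (Sym2 V)) ⊆ G.edgeSet ∧ Separates G (F : Set (Sym2 V)) S (T \ S) ∧
  ∀ F' : Finset (Sym2 V), (F' : Set (Sym2 V)) ⊆ G.edgeSet →
    Separates G (F' : Set (Sym2 V)) S (T \ S) → cutWeight c F ≤ cutWeight c F'

noncomputable def boundaryF {V : Type} [Fintype V] (G : SimpleGraph V) (C : Set V) :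
    Finset (Sym2 V) :=
  (Set.toFinite {e | e ∈ G.edgeSet ∧ ∃ u v, e = s(u, v) ∧ u ∈ C ∧ v ∉ C}).toFinset

noncomputable def numComponents {V : Type} (G : SimpleGraph V) : ℕ :=
  Nat.card G.ConnectedComponent

private lemma reach_ind {V : Type} {G : SimpleGraph V} {P : V → Prop}
    (h : ∀ x y, G.Adj x y → P x → P y) :
    ∀ {a b : V}, G.Reachable a b → P a → P b := by
  intro a b hr
  obtain ⟨p⟩ := hr
  induction p with
  | nil => exact id
  | cons hadj _ ih => exact fun ha => ih (h _ _ hadj ha)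

private lemma mem_boundaryF {V : Type} [Fintype V] {G : SimpleGraph V} {C : Set V}
    {e : Sym2 V} :
    e ∈ boundaryF G C ↔ e ∈ G.edgeSet ∧ ∃ u v, e = s(u, v) ∧ u ∈ C ∧ v ∉ C := by
  simp [boundaryF]

/-- removing the boundary of an elementary component `C` (with
`T ∩ C ⊆ S`) from `E_S` yields precisely the minimum cutset `E_{S'}` for
`S' = S ∖ (T ∩ C)`, provided `S'` is nonempty. -/
theorem minCutset_after_removing_elementary_component {V : Type} [Fintype V]
    (G : SimpleGraph V) (c : Sym2 V → ℝ)
    (hconn : G.Connected) (hpos : ∀ e ∈ G.edgeSet, 0 < c e)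
    (T : Set V)
    (E : Set V → Finset (Sym2 V))
    (hE : ∀ S₀ : Set V, S₀ ⊆ T → S₀.Nonempty → S₀ ≠ T → IsMinCutset G c T S₀ (E S₀))
    (hUniq : ∀ (S₀ : Set V) (F' : Finset (Sym2 V)),
      IsMinCutset G c T S₀ F' → F' = E S₀)
    (S : Set V) (hST : S ⊆ T) (hS : S.Nonempty) (hSne : S ≠ T)
    (w : V) (C : Set V)
    (hC : C = {v | (G.deleteEdges ((E S : Finset (Sym2 V)) : Set (Sym2 V))).Reachable w v})
    (hElem : numComponents
      (G.deleteEdges ((boundaryF G C : Finset (Sym2 V)) : Set (Sym2 V))) = 2)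
    (hTC : T ∩ C ⊆ S)
    (hS' : (S \ (T ∩ C)).Nonempty) :
    E (S \ (T ∩ C)) = E S \ boundaryF G C := by
  classical
  obtain ⟨hESsub, hESsep, hESmin⟩ := hE S hST hS hSne
  -- `C` is a connected component of `G'` = `G` minus `E S`.
  have hCiff : ∀ x y, (G.deleteEdges ((E S : Finset (Sym2 V)) : Set (Sym2 V))).Reachable x y →
      (x ∈ C ↔ y ∈ C) := by
    intro x y hxy
    rw [hC]
    exact ⟨fun h => h.trans hxy, fun h => h.trans hxy.symm⟩
  have hCadj : ∀ x y, (G.deleteEdges ((E S : Finset (Sym2 V)) : Set (Sym2 V))).Adj x y →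
      x ∈ C → y ∈ C := fun x y h hx => (hCiff x y h.reachable).mp hx
  -- closure under non-boundary edges of `G`
  have hbd : ∀ x y, G.Adj x y → s(x, y) ∉ boundaryF G C → x ∈ C → y ∈ C := by
    intro x y hadj hne hx
    by_contra hy
    exact hne (mem_boundaryF.mpr ⟨hadj, x, y, rfl, hx, hy⟩)
  -- boundary of `C` is contained in `E S`
  have hDsub : boundaryF G C ⊆ E S := by
    intro e he
    obtain ⟨hedge, u, v, rfl, hu, hv⟩ := mem_boundaryF.mp he
    by_contra hnotin
    exact hv (hCadj u v (SimpleGraph.deleteEdges_adj .. |>.mpr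
      ⟨hedge, by simpa using hnotin⟩) hu)
  -- terminals of `T \ S` lie outside `C`
  have hTnSC : ∀ t ∈ T \ S, t ∉ C := fun t ht htC => ht.2 (hTC ⟨ht.1, htC⟩)
  -- KEY: no vertex of `C`'s boundary on the outside is reachable (in `G'`) from a
  -- terminal `a ∈ S` lying outside `C`.
  have key : ∀ a ∈ S, a ∉ C → ∀ u v, G.Adj u v → u ∈ C → v ∉ C →
      ¬ (G.deleteEdges ((E S : Finset (Sym2 V)) : Set (Sym2 V))).Reachable a v := by
    intro a haS haC u v huv hu hv hreach
    have heES : s(u, v) ∈ E S := by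
      by_contra h
      exact hv (hCadj u v (SimpleGraph.deleteEdges_adj .. |>.mpr ⟨huv, by simpa using h⟩) hu)
    set F₂ := (E S).erase s(u, v) with hF₂def
    have hF₂sub : (F₂ : Set (Sym2 V)) ⊆ G.edgeSet := by
      intro e he
      exact hESsub (by exact_mod_cast Finset.erase_subset _ _ (by exact_mod_cast he))
    have hF₂sep : Separates G (F₂ : Set (Sym2 V)) S (T \ S) := by
      intro s hs t ht hr2
      have hPinv : ∀ x y, (G.deleteEdges (F₂ : Set (Sym2 V))).Adj x y →
          ((G.deleteEdges ((E S : Finset (Sym2 V)) : Set (Sym2 V))).Reachable a x ∨ x ∈ C) →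
          ((G.deleteEdges ((E S : Finset (Sym2 V)) : Set (Sym2 V))).Reachable a y ∨ y ∈ C) := by
        intro x y hxy hPx
        rw [SimpleGraph.deleteEdges_adj] at hxy
        obtain ⟨hxyG, hxyF⟩ := hxy
        by_cases hcase : s(x, y) = s(u, v)
        · rcases Sym2.eq_iff.mp hcase with ⟨rfl, rfl⟩ | ⟨rfl, rfl⟩
          · exact Or.inl hreach
          · exact Or.inr hu
        · have hnotES : s(x, y) ∉ E S := fun hmem =>
            hxyF (by exact_mod_cast Finset.mem_erase.mpr ⟨hcase, hmem⟩)
          have hadj' : (G.deleteEdges ((E S : Finset (Sym2 V)) : Set (Sym2 V))).Adj x y :=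
            SimpleGraph.deleteEdges_adj .. |>.mpr ⟨hxyG, by simpa using hnotES⟩
          rcases hPx with h | h
          · exact Or.inl (h.trans hadj'.reachable)
          · exact Or.inr (hCadj x y hadj' h)
      by_cases hPs : (G.deleteEdges ((E S : Finset (Sym2 V)) : Set (Sym2 V))).Reachable a s ∨ s ∈ C
      · rcases reach_ind hPinv hr2 hPs with h | h
        · exact hESsep a haS t ht h
        · exact hTnSC t ht h
      · have hRinv : ∀ x y, (G.deleteEdges (F₂ : Set (Sym2 V))).Adj x y →
            ((G.deleteEdges ((E S : Finset (Sym2 V)) : Set (Sym2 V))).Reachable s x ∧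
              ¬ ((G.deleteEdges ((E S : Finset (Sym2 V)) : Set (Sym2 V))).Reachable a x ∨ x ∈ C)) →
            ((G.deleteEdges ((E S : Finset (Sym2 V)) : Set (Sym2 V))).Reachable s y ∧
              ¬ ((G.deleteEdges ((E S : Finset (Sym2 V)) : Set (Sym2 V))).Reachable a y ∨ y ∈ C)) := by
          intro x y hxy hRx
          obtain ⟨hsx, hnPx⟩ := hRx
          rw [SimpleGraph.deleteEdges_adj] at hxy
          obtain ⟨hxyG, hxyF⟩ := hxy
          have hcase : s(x, y) ≠ s(u, v) := by
            intro hcase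
            rcases Sym2.eq_iff.mp hcase with ⟨rfl, rfl⟩ | ⟨rfl, rfl⟩
            · exact hnPx (Or.inr hu)
            · exact hnPx (Or.inl hreach)
          have hnotES : s(x, y) ∉ E S := fun hmem =>
            hxyF (by exact_mod_cast Finset.mem_erase.mpr ⟨hcase, hmem⟩)
          have hadj' : (G.deleteEdges ((E S : Finset (Sym2 V)) : Set (Sym2 V))).Adj x y :=
            SimpleGraph.deleteEdges_adj .. |>.mpr ⟨hxyG, by simpa using hnotES⟩
          refine ⟨hsx.trans hadj'.reachable, fun hPy => hnPx ?_⟩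
          rcases hPy with h | h
          · exact Or.inl (h.trans hadj'.symm.reachable)
          · exact Or.inr (hCadj y x hadj'.symm h)
        have hRt := reach_ind hRinv hr2 ⟨SimpleGraph.Reachable.refl s, hPs⟩
        exact hESsep s hs t ht hRt.1
    have hlt : cutWeight c F₂ < cutWeight c (E S) := by
      have hsum := Finset.sum_erase_add (E S) c heES
      have hpos' := hpos _ (hESsub (by exact_mod_cast heES))
      unfold cutWeight
      rw [hF₂def]
      linarith [hsum]
    exact absurd (hESmin F₂ hF₂sub hF₂sep) (not_le.mpr hlt)
  -- `F := E S \ boundaryF G C`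
  have hFsub : ((E S \ boundaryF G C : Finset (Sym2 V)) : Set (Sym2 V)) ⊆ G.edgeSet := by
    intro e he
    rw [Finset.coe_sdiff] at he
    exact hESsub he.1
  have hFsep : Separates G ((E S \ boundaryF G C : Finset (Sym2 V)) : Set (Sym2 V))
      (S \ (T ∩ C)) (T \ (S \ (T ∩ C))) := by
    intro a ha b hb hr
    have haS : a ∈ S := ha.1
    have haC : a ∉ C := fun h => ha.2 ⟨hST haS, h⟩
    have hPinv : ∀ x y,
        (G.deleteEdges ((E S \ boundaryF G C : Finset (Sym2 V)) : Set (Sym2 V))).Adj x y →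
        (G.deleteEdges ((E S : Finset (Sym2 V)) : Set (Sym2 V))).Reachable a x →
        (G.deleteEdges ((E S : Finset (Sym2 V)) : Set (Sym2 V))).Reachable a y := by
      intro x y hxy hax
      rw [SimpleGraph.deleteEdges_adj] at hxy
      obtain ⟨hxyG, hxyF⟩ := hxy
      by_cases hES' : s(x, y) ∈ E S
      · have hbdmem : s(x, y) ∈ boundaryF G C := by
          by_contra h
          exact hxyF (by exact_mod_cast Finset.mem_sdiff.mpr ⟨hES', h⟩)
        obtain ⟨hedge, u, v, huv, hu, hv⟩ := mem_boundaryF.mp hbdmem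
        have hxC : x ∉ C := fun h => haC ((hCiff a x hax).mpr h)
        rcases Sym2.eq_iff.mp huv with ⟨hxu, hyv⟩ | ⟨hxv, hyu⟩
        · exact absurd (hxu ▸ hu) hxC
        · exact absurd hax (hxv ▸ key a haS haC u v (G.mem_edgeSet.mp (huv ▸ hedge)) hu hv)
      · have hadj' : (G.deleteEdges ((E S : Finset (Sym2 V)) : Set (Sym2 V))).Adj x y :=
          SimpleGraph.deleteEdges_adj .. |>.mpr ⟨hxyG, by simpa using hES'⟩
        exact hax.trans hadj'.reachable
    have hab := reach_ind hPinv hr (SimpleGraph.Reachable.refl a)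
    by_cases hbC : b ∈ C
    · exact haC ((hCiff a b hab).mpr hbC)
    · have hbS : b ∉ S := fun h => hb.2 ⟨h, fun hTc => hbC hTc.2⟩
      exact hESsep a haS b ⟨hb.1, hbS⟩ hab
  -- facts about `S'`
  have hS'T : S \ (T ∩ C) ⊆ T := fun x hx => hST hx.1
  have hS'ne : S \ (T ∩ C) ≠ T := by
    obtain ⟨t, htT, htS⟩ := Set.exists_of_ssubset (hST.ssubset_of_ne hSne)
    intro h
    have : t ∈ S \ (T ∩ C) := by rw [h]; exact htT
    exact htS this.1
  obtain ⟨hE'sub, hE'sep, hE'min⟩ := hE (S \ (T ∩ C)) hS'T hS' hS'ne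
  -- `E S' ∪ boundaryF G C` separates `S` from `T \ S`
  have hUsub : ((E (S \ (T ∩ C)) ∪ boundaryF G C : Finset (Sym2 V)) : Set (Sym2 V)) ⊆
      G.edgeSet := by
    intro e he
    rw [Finset.coe_union] at he
    rcases he with h | h
    · exact hE'sub h
    · exact hESsub (by exact_mod_cast hDsub (by exact_mod_cast h))
  have hUsep : Separates G
      ((E (S \ (T ∩ C)) ∪ boundaryF G C : Finset (Sym2 V)) : Set (Sym2 V)) S (T \ S) := by
    intro s hs t ht hr
    have htC : t ∉ C := hTnSC t ht
    by_cases hsC : s ∈ C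
    · have hinv : ∀ x y,
          (G.deleteEdges ((E (S \ (T ∩ C)) ∪ boundaryF G C : Finset (Sym2 V)) : Set (Sym2 V))).Adj x y →
          x ∈ C → y ∈ C := by
        intro x y hxy hx
        rw [SimpleGraph.deleteEdges_adj] at hxy
        refine hbd x y hxy.1 (fun h => hxy.2 ?_) hx
        exact_mod_cast Finset.mem_union_right _ h
      exact htC (reach_ind hinv hr hsC)
    · have hsS' : s ∈ S \ (T ∩ C) := ⟨hs, fun h => hsC h.2⟩
      have hmono : ∀ x y,
          (G.deleteEdges ((E (S \ (T ∩ C)) ∪ boundaryF G C : Finset (Sym2 V)) : Set (Sym2 V))).Adj x y →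
          (G.deleteEdges ((E (S \ (T ∩ C)) : Finset (Sym2 V)) : Set (Sym2 V))).Adj x y := by
        intro x y hxy
        rw [SimpleGraph.deleteEdges_adj] at hxy ⊢
        exact ⟨hxy.1, fun h => hxy.2
          (by exact_mod_cast Finset.mem_union_left _ (by exact_mod_cast h))⟩
      have hr' : (G.deleteEdges ((E (S \ (T ∩ C)) : Finset (Sym2 V)) : Set (Sym2 V))).Reachable s t :=
        reach_ind (fun x y hxy hx => hx.trans (hmono x y hxy).reachable) hr
          (SimpleGraph.Reachable.refl s)
      exact hE'sep s hsS' t ⟨ht.1, fun h => ht.2 h.1⟩ hr'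
  -- weight bookkeeping
  have hsum : cutWeight c (E S \ boundaryF G C) + cutWeight c (boundaryF G C) =
      cutWeight c (E S) := Finset.sum_sdiff hDsub
  have h1 : cutWeight c (E (S \ (T ∩ C))) ≤ cutWeight c (E S \ boundaryF G C) :=
    hE'min _ hFsub hFsep
  have h2 : cutWeight c (E S) ≤ cutWeight c (E (S \ (T ∩ C)) ∪ boundaryF G C) :=
    hESmin _ hUsub hUsep
  have h3 : cutWeight c (E (S \ (T ∩ C)) ∪ boundaryF G C) ≤
      cutWeight c (E (S \ (T ∩ C))) + cutWeight c (boundaryF G C) := by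
    have hui := Finset.sum_union_inter (s₁ := E (S \ (T ∩ C))) (s₂ := boundaryF G C) (f := c)
    have hnn : 0 ≤ ∑ e ∈ E (S \ (T ∩ C)) ∩ boundaryF G C, c e :=
      Finset.sum_nonneg fun e he =>
        (hpos e (hE'sub (by exact_mod_cast (Finset.mem_inter.mp he).1))).le
    unfold cutWeight
    linarith [hui]
  have heq : cutWeight c (E S \ boundaryF G C) = cutWeight c (E (S \ (T ∩ C))) :=
    le_antisymm (by linarith) h1
  have hmincut : IsMinCutset G c T (S \ (T ∩ C)) (E S \ boundaryF G C) :=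
    ⟨hFsub, hFsep, fun F' hF'sub hF'sep => heq.le.trans (hE'min F' hF'sub hF'sep)⟩
  exact (hUniq _ _ hmincut).symm
end

section
/- Let G be a finite connected plane weighted graph with all k ≥ 2 terminals on the outer face. Then the number of subsets S ⊂ T (identified with their complements) whose minimum terminal cutset is elementary is at most k(k−1)/2. -/
/-! ### Auxiliary lemmas -/

lemma bool_eq_of_ne_of_ne : ∀ {x y z : Bool}, x ≠ z → y ≠ z → x = y := by decide

lemma const_of_no_change (h : ℕ → Bool) {i j : ℕ} (hij : i ≤ j)
    (hno : ∀ m, i ≤ m → m < j → h m = h (m + 1)) : h i = h j := by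
  induction j, hij using Nat.le_induction with
  | base => rfl
  | succ n hn ih =>
    have : h i = h n := ih (fun m hm hm' => hno m hm (by omega))
    rw [this, hno n hn (by omega)]

lemma changes_card_le_two (k : ℕ) (h : ℕ → Bool)
    (hpat : ∀ a b c d : ℕ, a < b → b < c → c < d → d ≤ k - 1 →
      ¬(h a = h c ∧ h b = h d ∧ h a ≠ h b)) :
    ((Finset.range (k - 1)).filter (fun i => h i ≠ h (i + 1))).card ≤ 2 := by
  set D := (Finset.range (k - 1)).filter (fun i => h i ≠ h (i + 1)) with hD
  by_contra hlt
  push_neg at hlt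
  have hne1 : D.Nonempty := Finset.card_pos.mp (by omega)
  set i1 := D.min' hne1 with hi1
  have hmem1 : i1 ∈ D := D.min'_mem hne1
  have hne2 : (D.erase i1).Nonempty := by
    rw [← Finset.card_pos, Finset.card_erase_of_mem hmem1]; omega
  set i2 := (D.erase i1).min' hne2 with hi2
  have hmem2' : i2 ∈ D.erase i1 := Finset.min'_mem _ hne2
  have hmem2 : i2 ∈ D := Finset.mem_of_mem_erase hmem2'
  have h12 : i1 < i2 :=
    lt_of_le_of_ne (D.min'_le _ hmem2) (Ne.symm (Finset.ne_of_mem_erase hmem2'))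
  have hne3 : ((D.erase i1).erase i2).Nonempty := by
    rw [← Finset.card_pos, Finset.card_erase_of_mem hmem2',
      Finset.card_erase_of_mem hmem1]; omega
  set i3 := ((D.erase i1).erase i2).min' hne3 with hi3
  have hmem3' : i3 ∈ (D.erase i1).erase i2 := Finset.min'_mem _ hne3
  have hmem3 : i3 ∈ D := Finset.mem_of_mem_erase (Finset.mem_of_mem_erase hmem3')
  have h23 : i2 < i3 :=
    lt_of_le_of_ne ((D.erase i1).min'_le _ (Finset.mem_of_mem_erase hmem3'))
      (Ne.symm (Finset.ne_of_mem_erase hmem3'))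
  have hmemD : ∀ m ∈ D, m < k - 1 ∧ h m ≠ h (m + 1) := by
    intro m hm
    rw [hD, Finset.mem_filter, Finset.mem_range] at hm
    exact hm
  have hnotD : ∀ m, m < k - 1 → m ∉ D → h m = h (m + 1) := by
    intro m hmk hm
    by_contra hne
    exact hm (by rw [hD, Finset.mem_filter, Finset.mem_range]; exact ⟨hmk, hne⟩)
  obtain ⟨hk1, hc1⟩ := hmemD _ hmem1
  obtain ⟨hk2, hc2⟩ := hmemD _ hmem2
  obtain ⟨hk3, hc3⟩ := hmemD _ hmem3
  have e12 : h (i1 + 1) = h i2 := by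
    apply const_of_no_change h (by omega)
    intro m hm hm'
    apply hnotD m (by omega)
    intro hmD
    have : i2 ≤ m := (D.erase i1).min'_le _ (Finset.mem_erase.mpr ⟨by omega, hmD⟩)
    omega
  have e23 : h (i2 + 1) = h i3 := by
    apply const_of_no_change h (by omega)
    intro m hm hm'
    apply hnotD m (by omega)
    intro hmD
    have : i3 ≤ m := ((D.erase i1).erase i2).min'_le _
      (Finset.mem_erase.mpr ⟨by omega, Finset.mem_erase.mpr ⟨by omega, hmD⟩⟩)
    omega
  refine hpat i1 i2 (i2 + 1) (i3 + 1) h12 (by omega) (by omega) (by omega) ?_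
  have hab : h i1 ≠ h i2 := by rw [← e12]; exact hc1
  have hac : h i1 = h (i2 + 1) := bool_eq_of_ne_of_ne hab hc2.symm
  have hbd : h i2 = h (i3 + 1) := by
    rw [← e23] at hc3
    exact bool_eq_of_ne_of_ne hc2 hc3.symm
  exact ⟨hac, hbd, hab⟩

lemma changes_nonempty (k : ℕ) (h : ℕ → Bool) {i j : ℕ} (hi : i ≤ k - 1) (hj : j ≤ k - 1)
    (hij : h i ≠ h j) :
    ((Finset.range (k - 1)).filter (fun m => h m ≠ h (m + 1))).Nonempty := by
  by_contra hemp
  rw [Finset.not_nonempty_iff_eq_empty] at hemp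
  have hall : ∀ m, m < k - 1 → h m = h (m + 1) := by
    intro m hm
    by_contra hne
    have : m ∈ (Finset.range (k - 1)).filter (fun m => h m ≠ h (m + 1)) := by
      rw [Finset.mem_filter, Finset.mem_range]; exact ⟨hm, hne⟩
    simp [hemp] at this
  have h0i : h 0 = h i := const_of_no_change h (Nat.zero_le _) (fun m _ hm => hall m (by omega))
  have h0j : h 0 = h j := const_of_no_change h (Nat.zero_le _) (fun m _ hm => hall m (by omega))
  exact hij (h0i ▸ h0j)

lemma determined (k : ℕ) (h1 h2 : ℕ → Bool)
    (hch : ∀ m, m < k - 1 → ((h1 m ≠ h1 (m + 1)) ↔ (h2 m ≠ h2 (m + 1))))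
    {j : ℕ} (hj : j ≤ k - 1) : (h1 j = h2 j) ↔ (h1 0 = h2 0) := by
  induction j with
  | zero => rfl
  | succ n ih =>
    rw [← ih (by omega)]
    have := hch n (by omega)
    revert this
    cases h1 n <;> cases h1 (n + 1) <;> cases h2 n <;> cases h2 (n + 1) <;> simp

lemma Separates.symm' {V : Type} {G : SimpleGraph V} {F : Set (Sym2 V)} {A B : Set V}
    (h : Separates G F A B) : Separates G F B A :=
  fun b hb a ha hr => h a ha b hb hr.symm

lemma reachable_of_mem_support {V : Type} {H : SimpleGraph V} {x y v : V}
    (p : H.Walk x y) (hv : v ∈ p.support) : H.Reachable x v := by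
  classical
  exact ⟨p.takeUntil v hv⟩

lemma support_mapLe {V : Type} {G G' : SimpleGraph V} (h : G ≤ G') {u v : V}
    (p : G.Walk u v) : (p.mapLe h).support = p.support := by
  simp only [SimpleGraph.Walk.mapLe, SimpleGraph.Walk.support_map]
  exact List.map_id _

lemma sameSide {V : Type} [Fintype V] (H : SimpleGraph V) (A B : Set V)
    (hsep : ∀ a ∈ A, ∀ b ∈ B, ¬ H.Reachable a b) (hB : B.Nonempty)
    (h2 : Nat.card H.ConnectedComponent = 2) {x y : V} (hx : x ∈ A) (hy : y ∈ A) :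
    H.Reachable x y := by
  classical
  by_contra hxy
  obtain ⟨b, hb⟩ := hB
  haveI : Fintype H.ConnectedComponent := Fintype.ofFinite _
  set cx := H.connectedComponentMk x with hcx
  set cy := H.connectedComponentMk y with hcy
  set cb := H.connectedComponentMk b with hcb
  have h1 : cx ≠ cy := fun h => hxy (SimpleGraph.ConnectedComponent.eq.mp h)
  have h2' : cx ≠ cb := fun h => hsep x hx b hb (SimpleGraph.ConnectedComponent.eq.mp h)
  have h3' : cy ≠ cb := fun h => hsep y hy b hb (SimpleGraph.ConnectedComponent.eq.mp h)
  have hcard : ({cx, cy, cb} : Finset H.ConnectedComponent).card = 3 := by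
    rw [Finset.card_insert_of_notMem (by simp [h1, h2']),
      Finset.card_insert_of_notMem (by simp [h3']), Finset.card_singleton]
  have hle : ({cx, cy, cb} : Finset H.ConnectedComponent).card
      ≤ Fintype.card H.ConnectedComponent := Finset.card_le_univ _
  rw [hcard, ← Nat.card_eq_fintype_card, h2] at hle
  omega

/-- the pattern `in, out, in, out` (or its complement) among four increasing terminals
is impossible for an elementary cutset. -/
lemma pattern_impossible {V : Type} [Fintype V] (G : SimpleGraph V)
    {k : ℕ} (t : Fin k ↪ V)
    (hcross : ∀ a b c' d : Fin k, a < b → b < c' → c' < d →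
      ∀ (p : G.Walk (t a) (t c')) (q : G.Walk (t b) (t d)),
        ∃ v, v ∈ p.support ∧ v ∈ q.support)
    (S : Set V) (F : Finset (Sym2 V))
    (hsub : S ⊆ Set.range t) (hne : S.Nonempty) (hneq : S ≠ Set.range t)
    (hsep : Separates G (F : Set (Sym2 V)) S (Set.range t \ S))
    (h2 : numComponents (G.deleteEdges (F : Set (Sym2 V))) = 2)
    (a b c d : Fin k) (hab : a < b) (hbc : b < c) (hcd : c < d)
    (hac : (t a ∈ S) ↔ (t c ∈ S)) (hbd : (t b ∈ S) ↔ (t d ∈ S))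
    (hnab : ¬((t a ∈ S) ↔ (t b ∈ S))) : False := by
  classical
  set H := G.deleteEdges (F : Set (Sym2 V)) with hH
  have h2' : Nat.card H.ConnectedComponent = 2 := h2
  have hTS : (Set.range t \ S).Nonempty := by
    obtain ⟨v, hvT, hvS⟩ := Set.exists_of_ssubset (HasSubset.Subset.ssubset_of_ne hsub hneq)
    exact ⟨v, hvT, hvS⟩
  have hsep' : ∀ x ∈ Set.range t \ S, ∀ y ∈ S, ¬ H.Reachable x y := Separates.symm' hsep
  have reachS : ∀ {x y : V}, x ∈ S → y ∈ S → H.Reachable x y :=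
    fun hx hy => sameSide H S (Set.range t \ S) hsep hTS h2' hx hy
  have reachC : ∀ {x y : V}, x ∈ Set.range t \ S → y ∈ Set.range t \ S → H.Reachable x y :=
    fun hx hy => sameSide H (Set.range t \ S) S hsep' hne h2' hx hy
  by_cases hta : t a ∈ S
  · have htc : t c ∈ S := hac.mp hta
    have htb : t b ∉ S := fun h => hnab ⟨fun _ => h, fun _ => hta⟩
    have htd : t d ∉ S := fun h => htb (hbd.mpr h)
    have hb' : t b ∈ Set.range t \ S := ⟨Set.mem_range_self _, htb⟩
    have hd' : t d ∈ Set.range t \ S := ⟨Set.mem_range_self _, htd⟩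
    have p : H.Walk (t a) (t c) := (reachS hta htc).some
    have q : H.Walk (t b) (t d) := (reachC hb' hd').some
    obtain ⟨v, hvp, hvq⟩ := hcross a b c d hab hbc hcd
      (p.mapLe (SimpleGraph.deleteEdges_le _)) (q.mapLe (SimpleGraph.deleteEdges_le _))
    rw [support_mapLe] at hvp hvq
    exact hsep (t a) hta (t b) hb'
      ((reachable_of_mem_support p hvp).trans (reachable_of_mem_support q hvq).symm)
  · have htc : t c ∉ S := fun h => hta (hac.mpr h)
    have htb : t b ∈ S := by
      by_contra h
      exact hnab ⟨fun h' => absurd h' hta, fun h' => absurd h' h⟩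
    have htd : t d ∈ S := hbd.mp htb
    have ha' : t a ∈ Set.range t \ S := ⟨Set.mem_range_self _, hta⟩
    have hc' : t c ∈ Set.range t \ S := ⟨Set.mem_range_self _, htc⟩
    have p : H.Walk (t a) (t c) := (reachC ha' hc').some
    have q : H.Walk (t b) (t d) := (reachS htb htd).some
    obtain ⟨v, hvp, hvq⟩ := hcross a b c d hab hbc hcd
      (p.mapLe (SimpleGraph.deleteEdges_le _)) (q.mapLe (SimpleGraph.deleteEdges_le _))
    rw [support_mapLe] at hvp hvq
    exact hsep (t b) htb (t a) ha'
      ((reachable_of_mem_support q hvq).trans (reachable_of_mem_support p hvp).symm)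

open Classical in
/-- choose some witness subset for a cutset -/
noncomputable def pickS {V : Type} [Fintype V] (G : SimpleGraph V) (c : Sym2 V → ℝ)
    (T : Set V) (F : Finset (Sym2 V)) : Set V :=
  if hF : ∃ S : Set V, S ⊆ T ∧ S.Nonempty ∧ S ≠ T ∧ IsMinCutset G c T S F ∧
      numComponents (G.deleteEdges (F : Set (Sym2 V))) = 2 then hF.choose else ∅

lemma pickS_spec {V : Type} [Fintype V] {G : SimpleGraph V} {c : Sym2 V → ℝ}
    {T : Set V} {F : Finset (Sym2 V)}
    (hF : ∃ S : Set V, S ⊆ T ∧ S.Nonempty ∧ S ≠ T ∧ IsMinCutset G c T S F ∧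
      numComponents (G.deleteEdges (F : Set (Sym2 V))) = 2) :
    pickS G c T F ⊆ T ∧ (pickS G c T F).Nonempty ∧ pickS G c T F ≠ T ∧
      IsMinCutset G c T (pickS G c T F) F ∧
      numComponents (G.deleteEdges (F : Set (Sym2 V))) = 2 := by
  classical
  rw [pickS]
  rw [dif_pos hF]
  exact hF.choose_spec

/-- the boolean membership sequence of a subset along the terminals (clamped) -/
noncomputable def memB {V : Type} {k : ℕ} (hk : 2 ≤ k) (t : Fin k ↪ V) (S : Set V)
    (n : ℕ) : Bool :=
  @decide (t ⟨min n (k - 1), by omega⟩ ∈ S) (Classical.propDecidable _)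

lemma memB_eq {V : Type} {k : ℕ} (hk : 2 ≤ k) (t : Fin k ↪ V) (S : Set V)
    {n : ℕ} (hn : n < k) :
    memB hk t S n = @decide (t ⟨n, hn⟩ ∈ S) (Classical.propDecidable _) := by
  have he : (⟨min n (k - 1), by omega⟩ : Fin k) = ⟨n, hn⟩ := by
    ext; simp; omega
  rw [memB, he]

set_option maxHeartbeats 2000000 in
/-- in a plane graph with all `k` terminals on the outer face in cyclic
order (captured by the planarity/crossing property `hcross`), the number of elementary
minimum terminal cutsets — equivalently, of elementary subsets `S ⊂ T` counted up to
complementation, since `S` and `T ∖ S` have the same (unique) minimum cutset —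
is at most `k(k−1)/2`. -/
theorem card_elementary_cutsets_le {V : Type} [Fintype V]
    (G : SimpleGraph V) (c : Sym2 V → ℝ)
    (hconn : G.Connected) (hpos : ∀ e ∈ G.edgeSet, 0 < c e)
    (k : ℕ) (hk : 2 ≤ k) (t : Fin k ↪ V)
    (hcross : ∀ a b c' d : Fin k, a < b → b < c' → c' < d →
      ∀ (p : G.Walk (t a) (t c')) (q : G.Walk (t b) (t d)),
        ∃ v, v ∈ p.support ∧ v ∈ q.support)
    (hUniq : ∀ (S : Set V) (F₁ F₂ : Finset (Sym2 V)),
      IsMinCutset G c (Set.range t) S F₁ → IsMinCutset G c (Set.range t) S F₂ → F₁ = F₂) :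
    Set.ncard {F : Finset (Sym2 V) | ∃ S : Set V,
        S ⊆ Set.range t ∧ S.Nonempty ∧ S ≠ Set.range t ∧
        IsMinCutset G c (Set.range t) S F ∧
        numComponents (G.deleteEdges (F : Set (Sym2 V))) = 2}
      ≤ k * (k - 1) / 2 := by
  classical
  set T : Set V := Set.range t with hT
  set f : Finset (Sym2 V) → Finset ℕ := fun F =>
    (Finset.range (k - 1)).filter
      (fun i => memB hk t (pickS G c T F) i ≠ memB hk t (pickS G c T F) (i + 1)) with hf
  set Target : Finset (Finset ℕ) :=
    (Finset.range (k - 1)).powersetCard 1 ∪ (Finset.range (k - 1)).powersetCard 2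
    with hTarget
  -- the key pattern-avoidance property
  have key : ∀ F : Finset (Sym2 V),
      (∃ S : Set V, S ⊆ T ∧ S.Nonempty ∧ S ≠ T ∧ IsMinCutset G c T S F ∧
        numComponents (G.deleteEdges (F : Set (Sym2 V))) = 2) →
      ∀ a b cc d : ℕ, a < b → b < cc → cc < d → d ≤ k - 1 →
        ¬(memB hk t (pickS G c T F) a = memB hk t (pickS G c T F) cc ∧
          memB hk t (pickS G c T F) b = memB hk t (pickS G c T F) d ∧
          memB hk t (pickS G c T F) a ≠ memB hk t (pickS G c T F) b) := by
    intro F hF a b cc d hab hbc hcd hdk hpat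
    obtain ⟨hsub, hne, hneq, hmin, h2⟩ := pickS_spec hF
    set S : Set V := pickS G c T F with hS
    have ha : a < k := by omega
    have hb : b < k := by omega
    have hc : cc < k := by omega
    have hd : d < k := by omega
    rw [memB_eq hk t S ha, memB_eq hk t S hb, memB_eq hk t S hc, memB_eq hk t S hd] at hpat
    obtain ⟨pac, pbd, pab⟩ := hpat
    refine pattern_impossible G t hcross S F hsub hne hneq hmin.2.1 h2
      ⟨a, ha⟩ ⟨b, hb⟩ ⟨cc, hc⟩ ⟨d, hd⟩
      (Fin.mk_lt_mk.mpr hab) (Fin.mk_lt_mk.mpr hbc) (Fin.mk_lt_mk.mpr hcd)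
      (decide_eq_decide.mp pac) (decide_eq_decide.mp pbd)
      (fun h => pab (decide_eq_decide.mpr h))
  -- cardinality of the change set is 1 or 2
  have hcard12 : ∀ F : Finset (Sym2 V),
      (∃ S : Set V, S ⊆ T ∧ S.Nonempty ∧ S ≠ T ∧ IsMinCutset G c T S F ∧
        numComponents (G.deleteEdges (F : Set (Sym2 V))) = 2) →
      1 ≤ (f F).card ∧ (f F).card ≤ 2 := by
    intro F hF
    obtain ⟨hsub, hne, hneq, hmin, h2⟩ := pickS_spec hF
    set S : Set V := pickS G c T F with hS
    constructor
    · -- nonempty: the sequence is not constant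
      obtain ⟨v, hv⟩ := hne
      obtain ⟨i, hi⟩ := hsub hv
      obtain ⟨w, hwT, hwS⟩ := Set.exists_of_ssubset (HasSubset.Subset.ssubset_of_ne hsub hneq)
      obtain ⟨j, hj⟩ := hwT
      have hvi : memB hk t S i.val = true := by
        rw [memB_eq hk t S i.isLt]
        simp only [Fin.eta]
        exact decide_eq_true (hi ▸ hv)
      have hwj : memB hk t S j.val = false := by
        rw [memB_eq hk t S j.isLt]
        simp only [Fin.eta]
        exact decide_eq_false (hj ▸ hwS)
      have := changes_nonempty k (memB hk t S) (i := i.val) (j := j.val)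
        (by have := i.isLt; omega) (by have := j.isLt; omega)
        (by rw [hvi, hwj]; simp)
      rw [hf]
      exact Finset.card_pos.mpr this
    · exact changes_card_le_two k (memB hk t S) (key F hF)
  refine le_trans (Set.ncard_le_ncard_of_injOn f ?_ ?_ (Finset.finite_toSet Target)) ?_
  · -- maps to Target
    intro F hF
    rw [Set.mem_setOf_eq] at hF
    obtain ⟨h1c, h2c⟩ := hcard12 F hF
    have hsubr : f F ⊆ Finset.range (k - 1) := Finset.filter_subset _ _
    have : (f F).card = 1 ∨ (f F).card = 2 := by omega
    rcases this with h | h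
    · exact Finset.mem_coe.mpr (Finset.mem_union_left _
        (Finset.mem_powersetCard.mpr ⟨hsubr, h⟩))
    · exact Finset.mem_coe.mpr (Finset.mem_union_right _
        (Finset.mem_powersetCard.mpr ⟨hsubr, h⟩))
  · -- injectivity
    intro F1 hF1 F2 hF2 hfe
    rw [Set.mem_setOf_eq] at hF1 hF2
    obtain ⟨hsub1, hne1, hneq1, hmin1, h21⟩ := pickS_spec hF1
    obtain ⟨hsub2, hne2, hneq2, hmin2, h22⟩ := pickS_spec hF2
    set S1 : Set V := pickS G c T F1 with hS1
    set S2 : Set V := pickS G c T F2 with hS2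
    set g1 : ℕ → Bool := memB hk t S1 with hg1
    set g2 : ℕ → Bool := memB hk t S2 with hg2
    have hch : ∀ m, m < k - 1 → ((g1 m ≠ g1 (m + 1)) ↔ (g2 m ≠ g2 (m + 1))) := by
      intro m hm
      have := Finset.ext_iff.mp hfe m
      simp only [hf, Finset.mem_filter, Finset.mem_range] at this
      constructor
      · intro h; exact (this.mp ⟨hm, h⟩).2
      · intro h; exact (this.mpr ⟨hm, h⟩).2
    by_cases h0 : g1 0 = g2 0
    · have heq : ∀ i : Fin k, (t i ∈ S1 ↔ t i ∈ S2) := by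
        intro i
        have hj : g1 i.val = g2 i.val :=
          (determined k g1 g2 hch (j := i.val) (by have := i.isLt; omega)).mpr h0
        rw [hg1, hg2, memB_eq hk t S1 i.isLt, memB_eq hk t S2 i.isLt] at hj
        have := decide_eq_decide.mp hj
        simpa only [Fin.eta] using this
      have hSS : S1 = S2 := by
        ext v
        constructor
        · intro hv
          obtain ⟨i, hi⟩ := hsub1 hv
          exact hi ▸ (heq i).mp (hi ▸ hv)
        · intro hv
          obtain ⟨i, hi⟩ := hsub2 hv
          exact hi ▸ (heq i).mpr (hi ▸ hv)
      exact hUniq S1 F1 F2 hmin1 (hSS ▸ hmin2)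
    · have hneqi : ∀ i : Fin k, (t i ∈ S1 ↔ t i ∉ S2) := by
        intro i
        have hj : g1 i.val ≠ g2 i.val := fun h =>
          h0 ((determined k g1 g2 hch (j := i.val) (by have := i.isLt; omega)).mp h)
        rw [hg1, hg2, memB_eq hk t S1 i.isLt, memB_eq hk t S2 i.isLt] at hj
        have hni : ¬((t ⟨i.val, i.isLt⟩ ∈ S1) ↔ (t ⟨i.val, i.isLt⟩ ∈ S2)) :=
          fun h => hj (decide_eq_decide.mpr h)
        simp only [Fin.eta] at hni
        constructor
        · intro hp hq; exact hni ⟨fun _ => hq, fun _ => hp⟩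
        · intro hq; by_contra hp
          exact hni ⟨fun h => absurd h hp, fun h => absurd h hq⟩
      have hSS : S1 = T \ S2 := by
        ext v
        constructor
        · intro hv
          obtain ⟨i, hi⟩ := hsub1 hv
          exact ⟨hsub1 hv, hi ▸ (hneqi i).mp (hi ▸ hv)⟩
        · rintro ⟨hvT, hvS⟩
          obtain ⟨i, hi⟩ := hvT
          exact hi ▸ (hneqi i).mpr (hi ▸ hvS)
      obtain ⟨msub, msep, mmin⟩ := hmin2
      have hdd : T \ (T \ S2) = S2 := Set.diff_diff_cancel_left hsub2
      have hmin2' : IsMinCutset G c T (T \ S2) F2 := by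
        refine ⟨msub, ?_, ?_⟩
        · rw [hdd]; exact Separates.symm' msep
        · intro F' hF' hsepF'
          rw [hdd] at hsepF'
          exact mmin F' hF' (Separates.symm' hsepF')
      exact hUniq S1 F1 F2 hmin1 (hSS ▸ hmin2')
  · -- counting
    have hdisj : Disjoint ((Finset.range (k - 1)).powersetCard 1)
        ((Finset.range (k - 1)).powersetCard 2) := by
      rw [Finset.disjoint_left]
      intro A hA1 hA2
      have e1 := (Finset.mem_powersetCard.mp hA1).2
      have e2 := (Finset.mem_powersetCard.mp hA2).2
      omega
    rw [hTarget, Set.ncard_coe_finset, Finset.card_union_of_disjoint hdisj,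
      Finset.card_powersetCard, Finset.card_powersetCard, Finset.card_range,
      Nat.choose_one_right]
    obtain ⟨m, rfl⟩ : ∃ m, k = m + 2 := ⟨k - 2, by omega⟩
    show (m + 1) + (m + 1).choose 2 ≤ (m + 2) * (m + 2 - 1) / 2
    have he : (m + 1) + (m + 1).choose 2 = (m + 2).choose 2 := by
      rw [Nat.choose_succ_succ (m + 1) 1, Nat.choose_one_right]
    rw [he, Nat.choose_two_right]
end
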